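/- arXiv:1701.00064 — 2 statements merged into one kernel-verified Lean document; each statement's English description precedes it below -/
import Mathlib

section
/- For every integer m ≥ 0, the quantity N(m) = m + log(m!) − m·ψ(m+1), where ψ is the digamma function, is nonnegative, and N(m) = 0 if and only if m = 0. -/
open Real Finset

/-- The digamma function at the positive integer `m + 1`:
`ψ(m+1) = -γ + Σ_{k=1}^m 1/k`. -/
noncomputable def psiSucc (m : ℕ) : ℝ :=
  -Real.eulerMascheroniConstant + ∑ k ∈ Finset.range m, (1 : ℝ) / (k + 1)

/-- The Wehrl-entropic nonclassicality of the photon number state `|m⟩`: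
`N(m) = m + log(m!) − m·ψ(m+1)`. -/
noncomputable def Nfock (m : ℕ) : ℝ :=
  m + Real.log (Nat.factorial m) - m * psiSucc m

/-!
The increment `N(m+1) - N(m)` equals `γ - (H_m - log (m+1))`, the gap between the Euler–Mascheroni
constant and the `m`-th term of the sequence increasing strictly to it. Hence `N` is strictly
increasing on `ℕ`, and `N(0) = 0`.
-/

lemma psiSucc_eq_harmonic (m : ℕ) : psiSucc m = -eulerMascheroniConstant + harmonic m := by
  simp [psiSucc, harmonic, one_div]

lemma Nfock_zero : Nfock 0 = 0 := by
  simp [Nfock]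

lemma Nfock_succ (m : ℕ) :
    Nfock (m + 1) = Nfock m + (eulerMascheroniConstant - eulerMascheroniSeq m) := by
  have hlog : log (m + 1).factorial = log (m + 1) + log m.factorial := by
    rw [Nat.factorial_succ]
    push_cast
    exact log_mul (by positivity) (by positivity)
  rw [Nfock, Nfock, hlog, psiSucc_eq_harmonic, psiSucc_eq_harmonic, harmonic_succ,
    eulerMascheroniSeq]
  push_cast
  field_simp
  ring

lemma strictMono_Nfock : StrictMono Nfock :=
  strictMono_nat_of_lt_succ fun m => by
    rw [Nfock_succ]
    linarith [eulerMascheroniSeq_lt_eulerMascheroniConstant m]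

theorem fock_nonclassicality_nonneg (m : ℕ) :
    0 ≤ Nfock m ∧ (Nfock m = 0 ↔ m = 0) := by
  refine ⟨Nfock_zero ▸ strictMono_Nfock.monotone m.zero_le, ?_⟩
  rw [← Nfock_zero, strictMono_Nfock.injective.eq_iff]
end

section
/- The Wehrl entropy of the photon number state |m⟩ equals 1 + m + log(m!) − m·ψ(m+1): that is, −∫_ℂ Q_m(α)·log(π·Q_m(α)) dα = 1 + m + log(m!) − m·ψ(m+1), where Q_m(α) = (1/π)·e^{−|α|²}·|α|^{2m}/m!. -/
open Real MeasureTheory Finset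

open Set

lemma L1 (n : ℕ) : IntegrableOn (fun t : ℝ => t ^ n * Real.exp (-t)) (Ioi 0) := by
  have h := Real.GammaIntegral_convergent (s := n + 1) (by positivity)
  refine h.congr_fun ?_ measurableSet_Ioi
  intro t ht
  simp [add_sub_cancel_right, rpow_natCast, mul_comm]

lemma L2 (n : ℕ) : ∫ t in Ioi (0:ℝ), t ^ n * Real.exp (-t) = n.factorial := by
  have h := (Real.Gamma_eq_integral (s := n + 1) (by positivity)).symm
  rw [Real.Gamma_nat_eq_factorial] at h
  rw [← h]
  refine setIntegral_congr_fun measurableSet_Ioi fun t ht => ?_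
  simp [add_sub_cancel_right, rpow_natCast, mul_comm]

lemma Labs (t : ℝ) (ht : 0 < t) : |Real.log t| ≤ 2 * t ^ (-(1:ℝ)/2) + t := by
  rcases le_or_gt 1 t with h | h
  · rw [abs_of_nonneg (Real.log_nonneg h)]
    have := Real.log_le_sub_one_of_pos ht
    nlinarith [Real.rpow_nonneg ht.le (-(1:ℝ)/2)]
  · rw [abs_of_nonpos (Real.log_nonpos ht.le h.le)]
    have h1 : Real.log (t ^ (-(1:ℝ)/2)) ≤ t ^ (-(1:ℝ)/2) - 1 :=
      Real.log_le_sub_one_of_pos (Real.rpow_pos_of_pos ht _)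
    rw [Real.log_rpow ht] at h1
    nlinarith

lemma L3 (n : ℕ) : IntegrableOn (fun t : ℝ => t ^ n * Real.log t * Real.exp (-t)) (Ioi 0) := by
  have h1 := Real.GammaIntegral_convergent (s := n + 1/2) (by positivity)
  have h2 := Real.GammaIntegral_convergent (s := n + 2) (by positivity)
  have hmaj : IntegrableOn
      (fun t : ℝ => 2 * (Real.exp (-t) * t ^ ((n:ℝ) + 1/2 - 1)) + Real.exp (-t) * t ^ ((n:ℝ) + 2 - 1))
      (Ioi 0) := (h1.const_mul 2).add h2
  refine Integrable.mono hmaj ?_ ?_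
  · refine (ContinuousOn.aestronglyMeasurable ?_ measurableSet_Ioi)
    exact (continuousOn_pow n).mul (Real.continuousOn_log.mono fun x hx => ne_of_gt hx)
      |>.mul (Real.continuous_exp.comp continuous_neg).continuousOn
  · filter_upwards [self_mem_ae_restrict measurableSet_Ioi] with t ht
    have ht : (0:ℝ) < t := ht
    have he : (0:ℝ) < Real.exp (-t) := Real.exp_pos _
    have hb := Labs t ht
    have h3 : |t ^ n * Real.log t * Real.exp (-t)| = t ^ n * |Real.log t| * Real.exp (-t) := by
      rw [abs_mul, abs_mul, abs_of_nonneg (pow_nonneg ht.le n), abs_of_nonneg he.le]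
    rw [Real.norm_eq_abs, Real.norm_eq_abs, h3]
    have key : t ^ n * |Real.log t| * Real.exp (-t) ≤
        2 * (Real.exp (-t) * t ^ ((n:ℝ) + 1/2 - 1)) + Real.exp (-t) * t ^ ((n:ℝ) + 2 - 1) := by
      have e1 : t ^ ((n:ℝ) + 1/2 - 1) = t ^ n * t ^ (-(1:ℝ)/2) := by
        rw [← Real.rpow_natCast t n, ← Real.rpow_add ht]; ring_nf
      have e2 : t ^ ((n:ℝ) + 2 - 1) = t ^ n * t := by
        rw [show (n:ℝ) + 2 - 1 = (n:ℝ) + 1 by ring, Real.rpow_add ht, Real.rpow_one,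
          Real.rpow_natCast]
      rw [e1, e2]
      have hp : (0:ℝ) ≤ t ^ n := pow_nonneg ht.le n
      nlinarith [mul_le_mul_of_nonneg_left hb (mul_nonneg hp he.le)]
    calc t ^ n * |Real.log t| * Real.exp (-t) ≤ _ := key
      _ ≤ |2 * (Real.exp (-t) * t ^ ((n:ℝ) + 1/2 - 1)) + Real.exp (-t) * t ^ ((n:ℝ) + 2 - 1)| :=
        le_abs_self _

lemma L4 (n : ℕ) : ∫ t in Ioi (0:ℝ), t ^ n * Real.log t * Real.exp (-t)
    = n.factorial * (-Real.eulerMascheroniConstant + harmonic n) := by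
  set D : ℂ := ∫ t : ℝ in Ioi 0, (t:ℂ) ^ (((n:ℝ) + 1 : ℂ) - 1) * (Real.log t * Real.exp (-t))
    with hD
  have hd : HasDerivAt Complex.GammaIntegral D (((n:ℝ) + 1 : ℝ) : ℂ) := by
    have := Complex.hasDerivAt_GammaIntegral (s := (((n:ℝ) + 1 : ℝ) : ℂ)) (by simp; positivity)
    convert this using 2
    push_cast
    ring
  have hre : HasDerivAt (fun x : ℝ => (Complex.GammaIntegral x).re) D.re ((n:ℝ) + 1) :=
    hd.real_of_complex
  have heq : (fun x : ℝ => (Complex.GammaIntegral x).re) =ᶠ[nhds ((n:ℝ) + 1)] Real.Gamma := by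
    filter_upwards [eventually_gt_nhds (show (0:ℝ) < (n:ℝ)+1 by positivity)] with x hx
    rw [Real.Gamma, Complex.Gamma_eq_integral]
    simpa using hx
  have h1 : deriv Real.Gamma ((n:ℝ) + 1) = D.re := by
    rw [← heq.deriv_eq, hre.deriv]
  rw [Real.deriv_Gamma_nat] at h1
  have h2 : D = ((∫ t in Ioi (0:ℝ), t ^ n * Real.log t * Real.exp (-t) : ℝ) : ℂ) := by
    rw [hD]
    have : ∀ t ∈ Ioi (0:ℝ), (t:ℂ) ^ (((n:ℝ) + 1 : ℂ) - 1) * ((Real.log t : ℂ) * (Real.exp (-t) : ℂ))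
        = ((t ^ n * Real.log t * Real.exp (-t) : ℝ) : ℂ) := by
      intro t ht
      rw [show (((n:ℝ) + 1 : ℂ) - 1) = ((n:ℕ) : ℂ) by push_cast; ring, Complex.cpow_natCast]
      push_cast
      ring
    rw [setIntegral_congr_fun measurableSet_Ioi this]
    exact integral_ofReal
  rw [h2] at h1
  simp only [Complex.ofReal_re] at h1
  rw [← h1]

lemma L5 (f : ℝ → ℝ) : ∫ α : ℂ, f ‖α‖
    = 2 * Real.pi * ∫ y in Ioi (0:ℝ), y * f y := by
  have h := MeasureTheory.integral_fun_norm_addHaar (F := ℝ) (volume : Measure ℂ) f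
  rw [h, Complex.finrank_real_complex, measureReal_def, Complex.volume_ball]
  simp only [ENNReal.toReal_mul, ENNReal.ofReal_one, one_pow, ENNReal.toReal_one,
    ENNReal.coe_toReal, NNReal.coe_real_pi, one_mul, smul_eq_mul, nsmul_eq_mul]
  have : ∫ y in Ioi (0:ℝ), y ^ (2 - 1) * f y = ∫ y in Ioi (0:ℝ), y * f y := by
    refine setIntegral_congr_fun measurableSet_Ioi fun y hy => ?_
    norm_num
  rw [this]
  push_cast
  ring

/-- Husimi Q-distribution of the photon number state `|m⟩`. -/
noncomputable def Qfock (m : ℕ) (α : ℂ) : ℝ :=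
  (1 / Real.pi) * Real.exp (-‖α‖ ^ 2) * ‖α‖ ^ (2 * m) /
    Nat.factorial m

theorem wehrl_entropy_fock (m : ℕ) :
    -∫ α : ℂ, Qfock m α * Real.log (Real.pi * Qfock m α) =
      1 + m + Real.log (Nat.factorial m) - m * psiSucc m := by
  have hm : (0:ℝ) < m.factorial := by positivity
  have hpi : (0:ℝ) < Real.pi := Real.pi_pos
  set Lf : ℝ := Real.log m.factorial with hLf
  -- radial profile
  set W : ℝ → ℝ := fun r =>
    (1 / Real.pi) * Real.exp (-r ^ 2) * r ^ (2 * m) / m.factorial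
      * ((m : ℝ) * Real.log (r ^ 2) - r ^ 2 - Lf) with hW
  set G : ℝ → ℝ := fun t =>
    ((m : ℝ) * (t ^ m * Real.log t * Real.exp (-t)) - t ^ (m+1) * Real.exp (-t)
      - Lf * (t ^ m * Real.exp (-t))) / m.factorial with hG
  -- Step 1: pointwise equality of integrands
  have key1 : ∀ α : ℂ, Qfock m α * Real.log (Real.pi * Qfock m α) = W ‖α‖ := by
    intro α
    rcases eq_or_ne α 0 with rfl | hα
    · simp only [norm_zero, hW, Qfock]
      rcases Nat.eq_zero_or_pos m with rfl | hm0
      · norm_num [hLf]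
      · rw [zero_pow (by omega : 2 * m ≠ 0)]
        norm_num
    · have hr : 0 < ‖α‖ := norm_pos_iff.mpr hα
      set r := ‖α‖ with hrdef
      have h1 : Real.pi * Qfock m α = Real.exp (-r ^ 2) * r ^ (2 * m) / m.factorial := by
        rw [Qfock, ← hrdef]; field_simp
      have h2 : Real.log (Real.exp (-r ^ 2) * r ^ (2 * m) / m.factorial)
          = (m : ℝ) * Real.log (r ^ 2) - r ^ 2 - Lf := by
        rw [Real.log_div (by positivity) hm.ne', Real.log_mul (Real.exp_ne_zero _)
          (by positivity), Real.log_exp, Real.log_pow, Real.log_pow, hLf]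
        push_cast
        ring
      rw [h1, h2, hW, Qfock, ← hrdef]
  -- Step.2 : y * W y = (1/(2π)) * ((2 * y ^ ((2:ℝ) - 1)) • G (y ^ (2:ℝ))) for y > 0
  have key2 : ∀ y ∈ Ioi (0:ℝ), y * W y
      = (1/(2*Real.pi)) * ((2 * y ^ ((2:ℝ) - 1)) • G (y ^ (2:ℝ))) := by
    intro y hy
    have hy : (0:ℝ) < y := hy
    have e1 : y ^ ((2:ℝ) - 1) = y := by
      norm_num
    have e2 : (y:ℝ) ^ ((2:ℝ)) = y ^ (2:ℕ) := by
      rw [show ((2:ℝ)) = ((2:ℕ):ℝ) by norm_num, Real.rpow_natCast]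
    rw [e1, e2, smul_eq_mul]
    simp only [hW, hG]
    have e3 : (y ^ (2:ℕ)) ^ m = y ^ (2 * m) := by rw [← pow_mul]
    have e4 : (y ^ (2:ℕ)) ^ (m+1) = y ^ (2 * m) * y ^ (2:ℕ) := by
      rw [← pow_mul, ← pow_add]; ring_nf
    rw [e3, e4]
    field_simp
  -- assemble
  have hint : ∫ α : ℂ, Qfock m α * Real.log (Real.pi * Qfock m α)
      = ∫ t in Ioi (0:ℝ), G t := by
    calc ∫ α : ℂ, Qfock m α * Real.log (Real.pi * Qfock m α)
        = ∫ α : ℂ, W ‖α‖ := by simp_rw [key1]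
      _ = 2 * Real.pi * ∫ y in Ioi (0:ℝ), y * W y := L5 W
      _ = 2 * Real.pi * ∫ y in Ioi (0:ℝ),
            (1/(2*Real.pi)) * ((2 * y ^ ((2:ℝ) - 1)) • G (y ^ (2:ℝ))) := by
          rw [setIntegral_congr_fun measurableSet_Ioi key2]
      _ = 2 * Real.pi * ((1/(2*Real.pi)) * ∫ y in Ioi (0:ℝ),
            (2 * y ^ ((2:ℝ) - 1)) • G (y ^ (2:ℝ))) := by rw [integral_const_mul]
      _ = 2 * Real.pi * ((1/(2*Real.pi)) * ∫ t in Ioi (0:ℝ), G t) := by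
          rw [integral_comp_rpow_Ioi_of_pos (g := G) (p := 2) (by norm_num)]
      _ = ∫ t in Ioi (0:ℝ), G t := by field_simp
  -- compute ∫ G
  have hGval : ∫ t in Ioi (0:ℝ), G t
      = (m : ℝ) * (-Real.eulerMascheroniConstant + harmonic m) - (m + 1) - Lf := by
    have i1 := L3 m
    have i2 := L1 (m+1)
    have i3 := L1 m
    have hsub : ∫ t in Ioi (0:ℝ), G t
        = (((m:ℝ) * ∫ t in Ioi (0:ℝ), t ^ m * Real.log t * Real.exp (-t))
          - (∫ t in Ioi (0:ℝ), t ^ (m+1) * Real.exp (-t))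
          - Lf * (∫ t in Ioi (0:ℝ), t ^ m * Real.exp (-t))) / m.factorial := by
      simp only [hG]
      have h12 : IntegrableOn (fun t : ℝ => (m:ℝ) * (t ^ m * Real.log t * Real.exp (-t))
          - t ^ (m+1) * Real.exp (-t)) (Ioi 0) := (i1.const_mul _).sub i2
      have h1' : IntegrableOn (fun t : ℝ => (m:ℝ) * (t ^ m * Real.log t * Real.exp (-t)))
          (Ioi 0) := i1.const_mul _
      have h3' : IntegrableOn (fun t : ℝ => Lf * (t ^ m * Real.exp (-t))) (Ioi 0) :=
        i3.const_mul _
      rw [integral_div, integral_sub h12 h3', integral_sub h1' i2, integral_const_mul,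
        integral_const_mul]
    rw [hsub, L4, L2, L2, Nat.factorial_succ]
    push_cast
    field_simp
  rw [hint, hGval]
  have hh : (harmonic m : ℝ) = ∑ k ∈ Finset.range m, (1 : ℝ) / (k + 1) := by
    rw [harmonic]
    push_cast
    simp [one_div]
  rw [psiSucc, ← hh]
  ring
end
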